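/- arXiv:1506.04894 — 8 statements merged into one kernel-verified Lean document; each statement's English description precedes it below -/
import Mathlib

section
/- Let (Ω, ℱ, μ) be a probability space, c₁, c₂ : Ω → ℝ nonnegative integrable measurable functions, and m ≥ 0. Suppose λ ∈ [0,1] is such that the threshold policy q_λ satisfies the balance condition ∫ q_λ c₁ dμ = ∫ (1−q_λ) c₂ dμ + m. Then q_λ maximizes the throughput over all policies: for every measurable q : Ω → [0,1], min{∫ q c₁ dμ, ∫ (1−q) c₂ dμ + m} ≤ min{∫ q_λ c₁ dμ, ∫ (1−q_λ) c₂ dμ + m} = ∫ q_λ c₁ dμ. -/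
open MeasureTheory

/-- Threshold (bang-bang) policy: receive (`q = 1`) iff `λ c₁ ≥ (1-λ) c₂`. -/
noncomputable def thresholdPolicy {Ω : Type*} (c₁ c₂ : Ω → ℝ) (l : ℝ) (ω : Ω) : ℝ :=
  if (1 - l) * c₂ ω ≤ l * c₁ ω then 1 else 0

lemma thresholdPolicy_mem {Ω : Type*} (c₁ c₂ : Ω → ℝ) (l : ℝ) (ω : Ω) :
    thresholdPolicy c₁ c₂ l ω ∈ Set.Icc (0 : ℝ) 1 := by
  unfold thresholdPolicy; split <;> norm_num

lemma thresholdPolicy_measurable {Ω : Type*} [MeasurableSpace Ω] {c₁ c₂ : Ω → ℝ}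
    (hmc₁ : Measurable c₁) (hmc₂ : Measurable c₂) (l : ℝ) :
    Measurable (thresholdPolicy c₁ c₂ l) := by
  unfold thresholdPolicy
  exact Measurable.ite (measurableSet_le (hmc₂.const_mul _) (hmc₁.const_mul _))
    measurable_const measurable_const

/-- If the threshold policy `q_λ` satisfies the balance condition
`∫ q_λ c₁ = ∫ (1-q_λ) c₂ + m`, then it maximizes the throughput
`min{∫ q c₁, ∫ (1-q) c₂ + m}` over all policies `q : Ω → [0,1]`, and its
throughput equals `∫ q_λ c₁`. -/
theorem threshold_policy_balanced_is_optimal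
    {Ω : Type*} [MeasurableSpace Ω] (μ : Measure Ω) [IsProbabilityMeasure μ]
    (c₁ c₂ : Ω → ℝ) (hmc₁ : Measurable c₁) (hmc₂ : Measurable c₂)
    (hic₁ : Integrable c₁ μ) (hic₂ : Integrable c₂ μ)
    (hnc₁ : ∀ ω, 0 ≤ c₁ ω) (hnc₂ : ∀ ω, 0 ≤ c₂ ω)
    (m : ℝ) (hm : 0 ≤ m)
    (l : ℝ) (hl : l ∈ Set.Icc (0 : ℝ) 1)
    (hbal : ∫ ω, thresholdPolicy c₁ c₂ l ω * c₁ ω ∂μ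
      = (∫ ω, (1 - thresholdPolicy c₁ c₂ l ω) * c₂ ω ∂μ) + m) :
    (∀ q : Ω → ℝ, Measurable q → (∀ ω, q ω ∈ Set.Icc (0 : ℝ) 1) →
      min (∫ ω, q ω * c₁ ω ∂μ) ((∫ ω, (1 - q ω) * c₂ ω ∂μ) + m)
        ≤ min (∫ ω, thresholdPolicy c₁ c₂ l ω * c₁ ω ∂μ)
            ((∫ ω, (1 - thresholdPolicy c₁ c₂ l ω) * c₂ ω ∂μ) + m)) ∧
    min (∫ ω, thresholdPolicy c₁ c₂ l ω * c₁ ω ∂μ)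
        ((∫ ω, (1 - thresholdPolicy c₁ c₂ l ω) * c₂ ω ∂μ) + m)
      = ∫ ω, thresholdPolicy c₁ c₂ l ω * c₁ ω ∂μ := by
  obtain ⟨hl0, hl1⟩ := hl
  set p := thresholdPolicy c₁ c₂ l with hp
  have hmp : Measurable p := thresholdPolicy_measurable hmc₁ hmc₂ l
  have hpmem : ∀ ω, p ω ∈ Set.Icc (0 : ℝ) 1 := thresholdPolicy_mem c₁ c₂ l
  -- integrability lemmas
  have int1 : ∀ (q : Ω → ℝ), Measurable q → (∀ ω, q ω ∈ Set.Icc (0:ℝ) 1) →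
      Integrable (fun ω => q ω * c₁ ω) μ := by
    intro q hq hqm
    refine hic₁.bdd_mul (c := 1) hq.aestronglyMeasurable (ae_of_all μ fun ω => ?_)
    rw [Real.norm_eq_abs, abs_le]
    constructor <;> nlinarith [(hqm ω).1, (hqm ω).2]
  have int2 : ∀ (q : Ω → ℝ), Measurable q → (∀ ω, q ω ∈ Set.Icc (0:ℝ) 1) →
      Integrable (fun ω => (1 - q ω) * c₂ ω) μ := by
    intro q hq hqm
    refine hic₂.bdd_mul (c := 1) ((measurable_const.sub hq).aestronglyMeasurable) (ae_of_all μ fun ω => ?_)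
    rw [Real.norm_eq_abs, abs_le]
    constructor <;> nlinarith [(hqm ω).1, (hqm ω).2]
  -- key: the convex combination is maximized pointwise by p
  have key : ∀ q : Ω → ℝ, Measurable q → (∀ ω, q ω ∈ Set.Icc (0:ℝ) 1) →
      l * (∫ ω, q ω * c₁ ω ∂μ) + (1 - l) * (∫ ω, (1 - q ω) * c₂ ω ∂μ)
        ≤ l * (∫ ω, p ω * c₁ ω ∂μ) + (1 - l) * (∫ ω, (1 - p ω) * c₂ ω ∂μ) := by
    intro q hq hqm
    have h1 : ∫ ω, (l * (q ω * c₁ ω) + (1 - l) * ((1 - q ω) * c₂ ω)) ∂μ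
        ≤ ∫ ω, (l * (p ω * c₁ ω) + (1 - l) * ((1 - p ω) * c₂ ω)) ∂μ := by
      refine integral_mono
        (((int1 q hq hqm).const_mul l).add ((int2 q hq hqm).const_mul (1 - l)))
        (((int1 p hmp hpmem).const_mul l).add ((int2 p hmp hpmem).const_mul (1 - l)))
        (fun ω => ?_)
      simp only [hp, thresholdPolicy]
      split
      · rename_i h
        nlinarith [(hqm ω).1, (hqm ω).2]
      · rename_i h
        push_neg at h
        nlinarith [(hqm ω).1, (hqm ω).2]
    rw [integral_add ((int1 q hq hqm).const_mul l) ((int2 q hq hqm).const_mul (1-l)),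
        integral_add ((int1 p hmp hpmem).const_mul l) ((int2 p hmp hpmem).const_mul (1-l)),
        integral_const_mul, integral_const_mul, integral_const_mul, integral_const_mul] at h1
    exact h1
  constructor
  · intro q hq hqm
    have hk := key q hq hqm
    set A := ∫ ω, q ω * c₁ ω ∂μ
    set B := ∫ ω, (1 - q ω) * c₂ ω ∂μ
    set A' := ∫ ω, p ω * c₁ ω ∂μ
    set B' := ∫ ω, (1 - p ω) * c₂ ω ∂μ
    have h1 : min A (B + m) ≤ A := min_le_left _ _
    have h2 : min A (B + m) ≤ B + m := min_le_right _ _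
    have h3 : min A' (B' + m) = A' := by rw [min_eq_left]; rw [hbal]
    rw [h3]
    nlinarith [hk]
  · rw [min_eq_left]; rw [hbal]
end

section
/- Let (Ω, ℱ, μ) be a probability space, c₁, c₂ : Ω → ℝ nonnegative integrable measurable functions, and m a real number with 0 ≤ m < ∫ c₁ dμ. Assume μ({c₁ = 0}) = 0, μ({c₂ = 0}) = 0, and μ({ω : λ c₁(ω) = (1−λ) c₂(ω)}) = 0 for every λ ∈ (0,1). Then there exists λ* ∈ (0,1) such that the threshold policy q_{λ*} satisfies the balance equation ∫ q_{λ*} c₁ dμ = ∫ (1−q_{λ*}) c₂ dμ + m. -/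
open MeasureTheory Filter Topology

/-- Under the stated nondegeneracy conditions and `0 ≤ m < ∫ c₁`, there exists
`λ* ∈ (0,1)` whose threshold policy satisfies the balance equation
`∫ q_{λ*} c₁ = ∫ (1-q_{λ*}) c₂ + m`. -/
theorem exists_balanced_threshold
    {Ω : Type*} [MeasurableSpace Ω] (μ : Measure Ω) [IsProbabilityMeasure μ]
    (c₁ c₂ : Ω → ℝ) (hmc₁ : Measurable c₁) (hmc₂ : Measurable c₂)
    (hic₁ : Integrable c₁ μ) (hic₂ : Integrable c₂ μ)
    (hnc₁ : ∀ ω, 0 ≤ c₁ ω) (hnc₂ : ∀ ω, 0 ≤ c₂ ω)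
    (m : ℝ) (hm0 : 0 ≤ m) (hm1 : m < ∫ ω, c₁ ω ∂μ)
    (hc₁pos : μ {ω | c₁ ω = 0} = 0) (hc₂pos : μ {ω | c₂ ω = 0} = 0)
    (hnotie : ∀ l ∈ Set.Ioo (0 : ℝ) 1, μ {ω | l * c₁ ω = (1 - l) * c₂ ω} = 0) :
    ∃ l ∈ Set.Ioo (0 : ℝ) 1,
      (∫ ω, thresholdPolicy c₁ c₂ l ω * c₁ ω ∂μ)
        = (∫ ω, (1 - thresholdPolicy c₁ c₂ l ω) * c₂ ω ∂μ) + m := by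
  classical
  set g : ℝ → Ω → ℝ := fun l ω => if (1 - l) * c₂ ω ≤ l * c₁ ω then c₁ ω else -(c₂ ω)
    with hg
  set F : ℝ → ℝ := fun l => ∫ ω, g l ω ∂μ with hF
  -- measurability
  have hmeas : ∀ l, Measurable (g l) := by
    intro l
    apply Measurable.ite _ hmc₁ hmc₂.neg
    exact measurableSet_le (hmc₂.const_mul _) (hmc₁.const_mul _)
  have hboundint : Integrable (fun ω => c₁ ω + c₂ ω) μ := hic₁.add hic₂
  have hbound : ∀ l, ∀ ω, ‖g l ω‖ ≤ c₁ ω + c₂ ω := by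
    intro l ω
    simp only [hg, Real.norm_eq_abs]
    split
    · rw [abs_of_nonneg (hnc₁ ω)]; linarith [hnc₂ ω]
    · rw [abs_neg, abs_of_nonneg (hnc₂ ω)]; linarith [hnc₁ ω]
  have hcont : ∀ l ∈ Set.Ioo (0:ℝ) 1, ContinuousAt F l := by
    intro l hl
    apply continuousAt_of_dominated (bound := fun ω => c₁ ω + c₂ ω)
    · exact Eventually.of_forall fun x => (hmeas x).aestronglyMeasurable
    · exact Eventually.of_forall fun x => Eventually.of_forall (hbound x)
    · exact hboundint
    · have hae : ∀ᵐ ω ∂μ, l * c₁ ω ≠ (1 - l) * c₂ ω := by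
        rw [ae_iff]
        simpa using hnotie l hl
      filter_upwards [hae] with ω hω
      have hc : Continuous fun x : ℝ => x * c₁ ω - (1 - x) * c₂ ω := (continuous_id.mul continuous_const).sub ((continuous_const.sub continuous_id).mul continuous_const)
      rcases lt_or_gt_of_ne hω.symm with h | h
      · -- (1-l) c₂ < l c₁ : eventually the condition holds, g x ω = c₁ ω nearby
        have hev : ∀ᶠ x in 𝓝 l, (0:ℝ) < x * c₁ ω - (1 - x) * c₂ ω :=
          (hc.tendsto l).eventually (eventually_gt_nhds (show (0:ℝ) < l * c₁ ω - (1 - l) * c₂ ω by linarith))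
        apply continuousAt_const.congr
        filter_upwards [hev] with x hx
        simp only [hg]
        rw [if_pos (by linarith)]
      · have hev : ∀ᶠ x in 𝓝 l, x * c₁ ω - (1 - x) * c₂ ω < 0 :=
          (hc.tendsto l).eventually (eventually_lt_nhds (show l * c₁ ω - (1 - l) * c₂ ω < 0 by linarith))
        apply continuousAt_const.congr
        filter_upwards [hev] with x hx
        simp only [hg]
        rw [if_neg (by intro h'; linarith)]
  -- a.e. positivity
  have hae1 : ∀ᵐ ω ∂μ, 0 < c₁ ω := by
    rw [ae_iff]
    convert hc₁pos using 2
    ext ω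
    simp only [Set.mem_setOf_eq, not_lt]
    exact ⟨fun h => le_antisymm h (hnc₁ ω), fun h => le_of_eq h⟩
  have hae2 : ∀ᵐ ω ∂μ, 0 < c₂ ω := by
    rw [ae_iff]
    convert hc₂pos using 2
    ext ω
    simp only [Set.mem_setOf_eq, not_lt]
    exact ⟨fun h => le_antisymm h (hnc₂ ω), fun h => le_of_eq h⟩
  -- limit as l → 1⁻
  have htend1 : Filter.Tendsto F (𝓝[<] (1:ℝ)) (𝓝 (∫ ω, c₁ ω ∂μ)) := by
    apply tendsto_integral_filter_of_dominated_convergence (fun ω => c₁ ω + c₂ ω)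
    · exact Eventually.of_forall fun x => (hmeas x).aestronglyMeasurable
    · exact Eventually.of_forall fun x => Eventually.of_forall (hbound x)
    · exact hboundint
    · filter_upwards [hae1] with ω hω
      have hc : Continuous fun x : ℝ => x * c₁ ω - (1 - x) * c₂ ω := (continuous_id.mul continuous_const).sub ((continuous_const.sub continuous_id).mul continuous_const)
      have hval : (1:ℝ) * c₁ ω - (1 - 1) * c₂ ω = c₁ ω := by ring
      have hev : ∀ᶠ x in 𝓝[<] (1:ℝ), (0:ℝ) < x * c₁ ω - (1 - x) * c₂ ω :=
        ((hc.tendsto 1).mono_left nhdsWithin_le_nhds).eventually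
          (eventually_gt_nhds (by rw [hval]; exact hω))
      apply Filter.Tendsto.congr' _ tendsto_const_nhds
      filter_upwards [hev] with x hx
      simp only [hg]
      rw [if_pos (by linarith)]
  -- limit as l → 0⁺
  have htend0 : Filter.Tendsto F (𝓝[>] (0:ℝ)) (𝓝 (-∫ ω, c₂ ω ∂μ)) := by
    rw [← integral_neg]
    apply tendsto_integral_filter_of_dominated_convergence (fun ω => c₁ ω + c₂ ω)
    · exact Eventually.of_forall fun x => (hmeas x).aestronglyMeasurable
    · exact Eventually.of_forall fun x => Eventually.of_forall (hbound x)
    · exact hboundint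
    · filter_upwards [hae2] with ω hω
      have hc : Continuous fun x : ℝ => x * c₁ ω - (1 - x) * c₂ ω := (continuous_id.mul continuous_const).sub ((continuous_const.sub continuous_id).mul continuous_const)
      have hval : (0:ℝ) * c₁ ω - (1 - 0) * c₂ ω = -c₂ ω := by ring
      have hev : ∀ᶠ x in 𝓝[>] (0:ℝ), x * c₁ ω - (1 - x) * c₂ ω < 0 :=
        ((hc.tendsto 0).mono_left nhdsWithin_le_nhds).eventually
          (eventually_lt_nhds (by rw [hval]; linarith))
      apply Filter.Tendsto.congr' _ tendsto_const_nhds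
      filter_upwards [hev] with x hx
      simp only [hg]
      rw [if_neg (by intro h'; linarith)]
  -- ∫ c₂ > 0
  have hIc₂ : 0 < ∫ ω, c₂ ω ∂μ := by
    rw [integral_pos_iff_support_of_nonneg (fun ω => hnc₂ ω) hic₂]
    have hcompl : μ (Function.support c₂)ᶜ = 0 := by
      have heq : (Function.support c₂)ᶜ = {ω | c₂ ω = 0} := by
        ext ω; simp [Function.support]
      rw [heq]; exact hc₂pos
    have hle : (1:ENNReal) ≤ μ (Function.support c₂) + μ (Function.support c₂)ᶜ := by
      have := measure_union_le (μ := μ) (Function.support c₂) (Function.support c₂)ᶜ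
      rw [Set.union_compl_self, measure_univ] at this
      exact this
    rw [hcompl, add_zero] at hle
    exact lt_of_lt_of_le (by norm_num) hle
  -- choose b near 1 with m < F b
  have hb : ∃ b ∈ Set.Ioo (0:ℝ) 1, m < F b := by
    have h1 : ∀ᶠ x in 𝓝[<] (1:ℝ), m < F x := htend1.eventually (eventually_gt_nhds hm1)
    have h2 : Set.Ioo (0:ℝ) 1 ∈ 𝓝[<] (1:ℝ) :=
      Ioo_mem_nhdsLT_of_mem ⟨by norm_num, le_refl 1⟩
    obtain ⟨b, hb1, hb2⟩ := (h1.and h2).exists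
    exact ⟨b, hb2, hb1⟩
  obtain ⟨b, hbmem, hFb⟩ := hb
  -- choose a ∈ (0, b) with F a < m
  have ha : ∃ a ∈ Set.Ioo (0:ℝ) b, F a < m := by
    have h1 : ∀ᶠ x in 𝓝[>] (0:ℝ), F x < m :=
      htend0.eventually (eventually_lt_nhds (by linarith))
    have h2 : Set.Ioo (0:ℝ) b ∈ 𝓝[>] (0:ℝ) :=
      Ioo_mem_nhdsGT_of_mem ⟨le_refl 0, hbmem.1⟩
    obtain ⟨a, ha1, ha2⟩ := (h1.and h2).exists
    exact ⟨a, ha2, ha1⟩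
  obtain ⟨a, hamem, hFa⟩ := ha
  have hsub : Set.Icc a b ⊆ Set.Ioo (0:ℝ) 1 := fun x hx =>
    ⟨lt_of_lt_of_le hamem.1 hx.1, lt_of_le_of_lt hx.2 hbmem.2⟩
  have hContOn : ContinuousOn F (Set.Icc a b) := fun x hx =>
    (hcont x (hsub hx)).continuousWithinAt
  have hivt := intermediate_value_Icc (le_of_lt hamem.2) hContOn
  obtain ⟨l, hlmem, hFl⟩ := hivt ⟨le_of_lt hFa, le_of_lt hFb⟩
  refine ⟨l, hsub hlmem, ?_⟩
  -- final conversion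
  have key : ∀ ω, g l ω =
      thresholdPolicy c₁ c₂ l ω * c₁ ω - (1 - thresholdPolicy c₁ c₂ l ω) * c₂ ω := by
    intro ω
    simp only [hg, thresholdPolicy]
    split <;> ring
  have hiq1 : Integrable (fun ω => thresholdPolicy c₁ c₂ l ω * c₁ ω) μ := by
    apply hic₁.mono'
    · exact (((measurable_const.ite
        (measurableSet_le (hmc₂.const_mul _) (hmc₁.const_mul _))
        measurable_const).mul hmc₁)).aestronglyMeasurable
    · apply Eventually.of_forall
      intro ω
      simp only [thresholdPolicy, Real.norm_eq_abs]
      split <;> simp [abs_of_nonneg (hnc₁ ω), hnc₁ ω]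
  have hiq2 : Integrable (fun ω => (1 - thresholdPolicy c₁ c₂ l ω) * c₂ ω) μ := by
    apply hic₂.mono'
    · exact ((measurable_const.sub (measurable_const.ite
        (measurableSet_le (hmc₂.const_mul _) (hmc₁.const_mul _))
        measurable_const)).mul hmc₂).aestronglyMeasurable
    · apply Eventually.of_forall
      intro ω
      simp only [thresholdPolicy, Real.norm_eq_abs]
      split <;> simp [abs_of_nonneg (hnc₂ ω), hnc₂ ω]
  have hsplit : F l = (∫ ω, thresholdPolicy c₁ c₂ l ω * c₁ ω ∂μ)
      - ∫ ω, (1 - thresholdPolicy c₁ c₂ l ω) * c₂ ω ∂μ := by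
    rw [hF]
    dsimp only
    rw [integral_congr_ae (Eventually.of_forall key)]
    exact integral_sub hiq1 hiq2
  rw [hsplit] at hFl
  linarith
end

section
/- Let Q₀ ≥ 0 and let a, d : {1,2,...} → ℝ be nonnegative sequences, with queue lengths Q[0] = Q₀, Q[b] = max{Q[b−1] − d[b], 0} + a[b], and departures b[i] = min{Q[i−1], d[i]}. If the Cesàro averages converge, (1/B) Σ_{i=1}^{B} a[i] → ā and (1/B) Σ_{i=1}^{B} d[i] → d̄ as B → ∞, then limsup_{B→∞} (1/B) Σ_{i=1}^{B} b[i] ≤ min{ā, d̄}. -/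
open Finset Filter

/-- Queue length process: `Q[0] = Q₀`, `Q[b] = max{Q[b-1] - d[b], 0} + a[b]`. -/
noncomputable def queueLen (Q₀ : ℝ) (a d : ℕ → ℝ) : ℕ → ℝ
  | 0 => Q₀
  | b + 1 => max (queueLen Q₀ a d b - d (b + 1)) 0 + a (b + 1)

/-- Actual departure at time `i ≥ 1`: `b[i] = min{Q[i-1], d[i]}`. -/
noncomputable def queueDep (Q₀ : ℝ) (a d : ℕ → ℝ) (i : ℕ) : ℝ :=
  min (queueLen Q₀ a d (i - 1)) (d i)

lemma queueLen_nonneg (Q₀ : ℝ) (hQ₀ : 0 ≤ Q₀) (a d : ℕ → ℝ) (ha : ∀ i, 0 ≤ a i) :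
    ∀ n, 0 ≤ queueLen Q₀ a d n := by
  intro n
  induction n with
  | zero => exact hQ₀
  | succ k ih =>
    have := ha (k + 1)
    simp only [queueLen]
    have : (0:ℝ) ≤ max (queueLen Q₀ a d k - d (k + 1)) 0 := le_max_right _ _
    linarith [ha (k+1)]

lemma queueDep_sum (Q₀ : ℝ) (a d : ℕ → ℝ) :
    ∀ B, ∑ i ∈ Finset.Icc 1 B, queueDep Q₀ a d i
      = Q₀ + (∑ i ∈ Finset.Icc 1 B, a i) - queueLen Q₀ a d B := by
  intro B
  induction B with
  | zero => simp [queueLen]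
  | succ k ih =>
    rw [show k + 1 = k.succ from rfl, Finset.sum_Icc_succ_top (by omega),
      Finset.sum_Icc_succ_top (by omega), ih]
    have hdep : queueDep Q₀ a d (k + 1) = min (queueLen Q₀ a d k) (d (k + 1)) := by
      simp [queueDep]
    have hQ : queueLen Q₀ a d (k + 1)
        = max (queueLen Q₀ a d k - d (k + 1)) 0 + a (k + 1) := rfl
    have hmm : max (queueLen Q₀ a d k - d (k + 1)) 0
        = queueLen Q₀ a d k - min (queueLen Q₀ a d k) (d (k + 1)) := by
      rcases le_total (queueLen Q₀ a d k) (d (k + 1)) with h | h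
      · rw [min_eq_left h, max_eq_right (by linarith)]; ring
      · rw [min_eq_right h, max_eq_left (by linarith)]
    rw [hdep, hQ, hmm]; ring

/-- If the Cesàro averages of arrivals and demands converge to `ā` and `d̄`,
then the limsup of the average departure rate is at most `min{ā, d̄}`. -/
theorem queue_departure_rate_limsup_le
    (Q₀ : ℝ) (hQ₀ : 0 ≤ Q₀) (a d : ℕ → ℝ)
    (ha : ∀ i, 0 ≤ a i) (hd : ∀ i, 0 ≤ d i)
    (abar dbar : ℝ)
    (haavg : Tendsto (fun B : ℕ => (1 / (B : ℝ)) * ∑ i ∈ Finset.Icc 1 B, a i)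
      atTop (nhds abar))
    (hdavg : Tendsto (fun B : ℕ => (1 / (B : ℝ)) * ∑ i ∈ Finset.Icc 1 B, d i)
      atTop (nhds dbar)) :
    Filter.limsup (fun B : ℕ => (1 / (B : ℝ)) * ∑ i ∈ Finset.Icc 1 B, queueDep Q₀ a d i)
      atTop ≤ min abar dbar := by
  set f := fun B : ℕ => (1 / (B : ℝ)) * ∑ i ∈ Finset.Icc 1 B, queueDep Q₀ a d i with hf
  have hfnonneg : ∀ B, 0 ≤ f B := by
    intro B
    apply mul_nonneg (by positivity)
    apply Finset.sum_nonneg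
    intro i _
    exact le_min (queueLen_nonneg Q₀ hQ₀ a d ha _) (hd i)
  have hcobdd : IsCoboundedUnder (· ≤ ·) atTop f :=
    isCoboundedUnder_le_of_le atTop hfnonneg
  have h1 : limsup f atTop ≤ abar := by
    -- f B ≤ Q₀ / B + avg a
    have hg : Tendsto (fun B : ℕ => Q₀ / (B : ℝ)
        + (1 / (B : ℝ)) * ∑ i ∈ Finset.Icc 1 B, a i) atTop (nhds abar) := by
      have h0 : Tendsto (fun B : ℕ => Q₀ / (B : ℝ)) atTop (nhds 0) :=
        tendsto_const_nhds.div_atTop tendsto_natCast_atTop_atTop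
      simpa using h0.add haavg
    have hle : ∀ᶠ B in atTop, f B ≤ Q₀ / (B : ℝ)
        + (1 / (B : ℝ)) * ∑ i ∈ Finset.Icc 1 B, a i := by
      filter_upwards [eventually_ge_atTop 1] with B hB
      have hBpos : (0:ℝ) < B := by exact_mod_cast hB
      rw [hf]
      simp only
      rw [queueDep_sum]
      have hQn := queueLen_nonneg Q₀ hQ₀ a d ha B
      have h1B : (0:ℝ) ≤ 1 / B := by positivity
      have hq : Q₀ / (B:ℝ) = Q₀ * (1 / B) := div_eq_mul_one_div _ _
      nlinarith [mul_nonneg h1B hQn]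
    calc limsup f atTop
        ≤ limsup (fun B : ℕ => Q₀ / (B : ℝ)
            + (1 / (B : ℝ)) * ∑ i ∈ Finset.Icc 1 B, a i) atTop :=
          limsup_le_limsup hle hcobdd hg.isBoundedUnder_le
      _ = abar := hg.limsup_eq
  have h2 : limsup f atTop ≤ dbar := by
    have hle : ∀ᶠ B in atTop, f B ≤ (1 / (B : ℝ)) * ∑ i ∈ Finset.Icc 1 B, d i := by
      filter_upwards with B
      apply mul_le_mul_of_nonneg_left _ (by positivity)
      apply Finset.sum_le_sum
      intro i _
      exact min_le_right _ _
    calc limsup f atTop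
        ≤ limsup (fun B : ℕ => (1 / (B : ℝ)) * ∑ i ∈ Finset.Icc 1 B, d i) atTop :=
          limsup_le_limsup hle hcobdd hdavg.isBoundedUnder_le
      _ = dbar := hdavg.limsup_eq
  exact le_min h1 h2
end

section
/- Let S : ℕ → ℝ be a sequence with S[0] = 0 such that S[n]/n → c as n → ∞ for some real c < 0. Then (1/B) · max_{0 ≤ k ≤ B} ( S[B] − S[k] ) → 0 as B → ∞. -/
open Finset Filter

/-- If `S[0] = 0` and `S[n]/n → c < 0`, then the normalized largest backward
increment `(1/B) · max_{0 ≤ k ≤ B}(S[B] - S[k])` tends to `0`. -/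
theorem max_backward_increment_sublinear
    (S : ℕ → ℝ) (hS0 : S 0 = 0) (c : ℝ) (hc : c < 0)
    (hS : Tendsto (fun n : ℕ => S n / (n : ℝ)) atTop (nhds c)) :
    Tendsto
      (fun B : ℕ => (1 / (B : ℝ)) *
        (Finset.Icc 0 B).sup' (Finset.nonempty_Icc.mpr (Nat.zero_le B))
          (fun k => S B - S k))
      atTop (nhds 0) := by
  rw [Metric.tendsto_atTop] at hS ⊢
  intro ε hε
  set T : ℕ → ℝ := fun B => (Finset.Icc 0 B).sup'
    (Finset.nonempty_Icc.mpr (Nat.zero_le B)) (fun k => S B - S k) with hT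
  set ε' := min (ε / 4) (-c / 2) with hε'def
  have hε' : (0:ℝ) < ε' := lt_min (by linarith) (by linarith)
  have hε'2 : ε' ≤ ε / 4 := min_le_left _ _
  have hε'3 : ε' ≤ -c / 2 := min_le_right _ _
  obtain ⟨N₁, hN₁⟩ := hS ε' hε'
  set N₂ := max N₁ 1 with hN₂def
  set M := (Finset.Icc 0 N₂).sup' (Finset.nonempty_Icc.mpr (Nat.zero_le N₂))
    (fun k => |S k|) with hMdef
  have hM0 : (0:ℝ) ≤ M := le_trans (abs_nonneg (S 0))
    (Finset.le_sup' (fun k => |S k|) (by simp))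
  obtain ⟨N₃, hN₃⟩ : ∃ N₃ : ℕ, 2 * M / ε < (N₃ : ℝ) := exists_nat_gt _
  refine ⟨max N₂ N₃, fun B hB => ?_⟩
  have hBN₂ : N₂ ≤ B := le_trans (le_max_left _ _) hB
  have hBN₃ : N₃ ≤ B := le_trans (le_max_right _ _) hB
  have hB1 : 1 ≤ B := le_trans (le_max_right _ _) hBN₂
  have hBpos : (0:ℝ) < (B : ℝ) := by exact_mod_cast hB1
  have key : ∀ n : ℕ, N₂ ≤ n → S n < (c + ε') * n ∧ (c - ε') * n < S n := by
    intro n hn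
    have hn1 : 1 ≤ n := le_trans (le_max_right _ _) hn
    have hnpos : (0:ℝ) < (n : ℝ) := by exact_mod_cast hn1
    have h := hN₁ n (le_trans (le_max_left _ _) hn)
    rw [Real.dist_eq, abs_lt] at h
    constructor
    · have h1 : S n / n < c + ε' := by linarith [h.2]
      calc S n = (S n / n) * n := by field_simp
        _ < (c + ε') * n := mul_lt_mul_of_pos_right h1 hnpos
    · have h2 : c - ε' < S n / n := by linarith [h.1]
      calc (c - ε') * n < (S n / n) * n := mul_lt_mul_of_pos_right h2 hnpos
        _ = S n := by field_simp
  have hSB := (key B hBN₂).1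
  have hsup_le : T B ≤ ε / 2 * B + M := by
    apply Finset.sup'_le
    intro k hk
    rcases le_or_gt N₂ k with h | h
    · have hk1 := (key k h).2
      have hkB : (k:ℝ) ≤ (B:ℝ) := by exact_mod_cast (Finset.mem_Icc.mp hk).2
      have hk0 : (0:ℝ) ≤ (k:ℝ) := Nat.cast_nonneg k
      have hc1 : c * ((B:ℝ) - k) ≤ 0 :=
        mul_nonpos_of_nonpos_of_nonneg hc.le (by linarith)
      have hc2 : ε' * ((B:ℝ) + k) ≤ ε / 4 * ((B:ℝ) + k) :=
        mul_le_mul_of_nonneg_right hε'2 (by linarith)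
      nlinarith
    · have hMk : |S k| ≤ M :=
        Finset.le_sup' (fun k => |S k|) (Finset.mem_Icc.mpr ⟨Nat.zero_le _, h.le⟩)
      have habs := (abs_le.mp hMk).1
      have hc3 : (c + ε') * (B:ℝ) ≤ 0 :=
        mul_nonpos_of_nonpos_of_nonneg (by linarith) hBpos.le
      nlinarith
  have hsup0 : (0:ℝ) ≤ T B := by
    have h := Finset.le_sup' (fun k => S B - S k) (show B ∈ Finset.Icc 0 B by simp)
    simp only [sub_self] at h
    exact h
  have hfnonneg : 0 ≤ (1 / (B : ℝ)) * T B :=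
    mul_nonneg (by positivity) hsup0
  rw [Real.dist_eq, sub_zero, abs_of_nonneg hfnonneg]
  have h2M : 2 * M < (B:ℝ) * ε := by
    have hcast : (N₃ : ℝ) ≤ (B : ℝ) := by exact_mod_cast hBN₃
    have := lt_of_lt_of_le hN₃ hcast
    exact (div_lt_iff₀ hε).mp this
  calc (1 / (B : ℝ)) * T B
      ≤ (1 / (B : ℝ)) * (ε / 2 * B + M) :=
        mul_le_mul_of_nonneg_left hsup_le (by positivity)
    _ < ε := by
        rw [one_div, inv_mul_lt_iff₀ hBpos]
        nlinarith
end

section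
/- Let Q₀ ≥ 0 and let a, d : {1,2,...} → ℝ be nonnegative sequences with a bounded (there is A with a[i] ≤ A for all i), and queue lengths Q[0] = Q₀, Q[b] = max{Q[b−1] − d[b], 0} + a[b]. Let S[n] = Σ_{i=1}^{n} (a[i] − d[i]). If S[n]/n → c for some c < 0 (the queue is underloaded on average), then the queue length is sublinear: Q[B]/B → 0 as B → ∞. -/
open Finset Filter

/-- If arrivals are bounded and the net-input partial sums satisfy
`S[n]/n → c < 0`, then the queue length is sublinear: `Q[B]/B → 0`. -/
theorem queue_length_sublinear_when_underloaded
    (Q₀ : ℝ) (hQ₀ : 0 ≤ Q₀) (a d : ℕ → ℝ)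
    (ha : ∀ i, 0 ≤ a i) (hd : ∀ i, 0 ≤ d i)
    (A : ℝ) (haA : ∀ i, a i ≤ A)
    (S : ℕ → ℝ) (hS : ∀ n, S n = ∑ i ∈ Finset.Icc 1 n, (a i - d i))
    (c : ℝ) (hc : c < 0)
    (hSc : Tendsto (fun n : ℕ => S n / (n : ℝ)) atTop (nhds c)) :
    Tendsto (fun B : ℕ => queueLen Q₀ a d B / (B : ℝ)) atTop (nhds 0) := by
  have hQnn : ∀ B, 0 ≤ queueLen Q₀ a d B := by
    intro B
    induction B with
    | zero => exact hQ₀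
    | succ b ih =>
      show 0 ≤ max (queueLen Q₀ a d b - d (b + 1)) 0 + a (b + 1)
      exact add_nonneg (le_max_right _ _) (ha _)
  set K := max Q₀ A with hK
  have hKA : A ≤ K := le_max_right _ _
  have hKnn : 0 ≤ K := le_trans hQ₀ (le_max_left _ _)
  have hSrec : ∀ b, S (b + 1) = S b + (a (b + 1) - d (b + 1)) := by
    intro b
    rw [hS, hS, Finset.sum_Icc_succ_top (Nat.succ_le_succ (Nat.zero_le b))]
  have hbound : ∀ B, ∃ k, k ≤ B ∧ queueLen Q₀ a d B ≤ K + (S B - S k) := by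
    intro B
    induction B with
    | zero =>
      exact ⟨0, le_refl 0, by rw [sub_self, add_zero]; exact le_max_left Q₀ A⟩
    | succ b ih =>
      obtain ⟨k, hk, hQb⟩ := ih
      rcases le_total (queueLen Q₀ a d b - d (b + 1)) 0 with h | h
      · refine ⟨b + 1, le_refl _, ?_⟩
        show max (queueLen Q₀ a d b - d (b + 1)) 0 + a (b + 1) ≤ _
        rw [max_eq_right h, sub_self, add_zero, zero_add]
        exact (haA _).trans hKA
      · refine ⟨k, hk.trans (Nat.le_succ b), ?_⟩
        show max (queueLen Q₀ a d b - d (b + 1)) 0 + a (b + 1) ≤ _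
        rw [max_eq_left h]
        have := hSrec b
        linarith
  rw [Metric.tendsto_atTop]
  intro ε hε
  set ε' := min (ε / 4) (-c / 2) with hε'
  have hε'pos : 0 < ε' := lt_min (by linarith) (by linarith)
  have hε'le : ε' ≤ ε / 4 := min_le_left _ _
  have hcε : c + ε' < 0 := by
    have : ε' ≤ -c / 2 := min_le_right _ _
    linarith
  obtain ⟨N₁, hN₁⟩ := Metric.tendsto_atTop.mp hSc ε' hε'pos
  set N := max N₁ 1 with hN
  set C₀ := ∑ j ∈ Finset.range N, |S j| with hC₀
  have hC₀nn : 0 ≤ C₀ := Finset.sum_nonneg fun _ _ => abs_nonneg _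
  have hup : ∀ n, N ≤ n → S n ≤ (c + ε') * n := by
    intro n hn
    have hn1 : 1 ≤ n := le_trans (le_max_right N₁ 1) hn
    have hnpos : (0 : ℝ) < n := by exact_mod_cast hn1
    have h := hN₁ n (le_trans (le_max_left N₁ 1) hn)
    rw [Real.dist_eq, abs_lt] at h
    have : S n / n < c + ε' := by linarith [h.2]
    linarith [(div_lt_iff₀ hnpos).mp this]
  have hlo : ∀ n, N ≤ n → (c - ε') * n ≤ S n := by
    intro n hn
    have hn1 : 1 ≤ n := le_trans (le_max_right N₁ 1) hn
    have hnpos : (0 : ℝ) < n := by exact_mod_cast hn1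
    have h := hN₁ n (le_trans (le_max_left N₁ 1) hn)
    rw [Real.dist_eq, abs_lt] at h
    have : c - ε' < S n / n := by linarith [h.1]
    linarith [(lt_div_iff₀ hnpos).mp this]
  refine ⟨max N (⌈(K + C₀) * 2 / ε⌉₊ + 1), fun B hB => ?_⟩
  have hBN : N ≤ B := le_trans (le_max_left _ _) hB
  have hB1 : 1 ≤ B := le_trans (le_max_right N₁ 1) hBN
  have hBpos : (0 : ℝ) < B := by exact_mod_cast hB1
  obtain ⟨k, hkB, hQ⟩ := hbound B
  have key : queueLen Q₀ a d B ≤ K + C₀ + 2 * ε' * B := by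
    have h1 : S B ≤ (c + ε') * B := hup B hBN
    have h1' : 0 ≤ -(c + ε') * B := mul_nonneg (by linarith) hBpos.le
    have h2' : 0 ≤ 2 * ε' * B := mul_nonneg (by linarith) hBpos.le
    rcases lt_or_ge k N with hkN | hkN
    · have h2 : -S k ≤ C₀ := by
        have habs : |S k| ≤ C₀ :=
          Finset.single_le_sum (f := fun j => |S j|) (fun _ _ => abs_nonneg _)
            (Finset.mem_range.mpr hkN)
        linarith [neg_abs_le (S k)]
      linarith
    · have h2 : (c - ε') * k ≤ S k := hlo k hkN
      have hkB' : (k : ℝ) ≤ B := Nat.cast_le.mpr hkB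
      have hprod : 0 ≤ -(c - ε') * ((B : ℝ) - k) :=
        mul_nonneg (by linarith) (by linarith)
      nlinarith
  have hd0 : dist (queueLen Q₀ a d B / B) 0 = queueLen Q₀ a d B / B := by
    rw [dist_zero_right, Real.norm_eq_abs, abs_of_nonneg (div_nonneg (hQnn B) hBpos.le)]
  rw [hd0]
  have hBbig : (K + C₀) * 2 / ε < B := by
    have h : ⌈(K + C₀) * 2 / ε⌉₊ + 1 ≤ B := le_trans (le_max_right _ _) hB
    calc (K + C₀) * 2 / ε ≤ ⌈(K + C₀) * 2 / ε⌉₊ := Nat.le_ceil _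
      _ < B := by exact_mod_cast Nat.lt_of_succ_le h
  have hfrac : (K + C₀) / B < ε / 2 := by
    rw [div_lt_iff₀ hBpos]
    rw [div_lt_iff₀ hε] at hBbig
    nlinarith
  have hle : queueLen Q₀ a d B / B ≤ (K + C₀) / B + 2 * ε' := by
    rw [div_add' _ _ _ hBpos.ne', div_le_div_iff₀ hBpos hBpos]
    nlinarith [key]
  linarith
end

section
/- Let Q₀ ≥ 0 and let a, d : {1,2,...} → ℝ be nonnegative sequences with d bounded (there is D with d[i] ≤ D for all i), queue lengths Q[0] = Q₀, Q[b] = max{Q[b−1] − d[b], 0} + a[b], and departures b[i] = min{Q[i−1], d[i]}. If (1/B) Σ_{i=1}^{B} (a[i] − d[i]) → c for some c > 0 (average arrivals strictly exceed average demand) and (1/B) Σ_{i=1}^{B} d[i] → d̄, then the average departure rate converges to the average demand: (1/B) Σ_{i=1}^{B} b[i] → d̄ as B → ∞. -/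
open Finset Filter

lemma queueLen_ge (Q₀ : ℝ) (a d : ℕ → ℝ) :
    ∀ b, Q₀ + ∑ i ∈ Finset.Icc 1 b, (a i - d i) ≤ queueLen Q₀ a d b := by
  intro b
  induction b with
  | zero => simp [queueLen]
  | succ n ih =>
    rw [Finset.sum_Icc_succ_top (Nat.one_le_iff_ne_zero.mpr (Nat.succ_ne_zero n))]
    simp only [queueLen]
    have h := le_max_left (queueLen Q₀ a d n - d (n + 1)) 0
    linarith

/-- If the demands are bounded, the average net input tends to `c > 0`
(overloaded queue) and the average demand tends to `d̄`, then the average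
departure rate tends to `d̄`. -/
theorem queue_departure_rate_overloaded
    (Q₀ : ℝ) (hQ₀ : 0 ≤ Q₀) (a d : ℕ → ℝ)
    (ha : ∀ i, 0 ≤ a i) (hd : ∀ i, 0 ≤ d i)
    (D : ℝ) (hdD : ∀ i, d i ≤ D)
    (c : ℝ) (hc : 0 < c)
    (hnet : Tendsto (fun B : ℕ => (1 / (B : ℝ)) * ∑ i ∈ Finset.Icc 1 B, (a i - d i))
      atTop (nhds c))
    (dbar : ℝ)
    (hdavg : Tendsto (fun B : ℕ => (1 / (B : ℝ)) * ∑ i ∈ Finset.Icc 1 B, d i)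
      atTop (nhds dbar)) :
    Tendsto (fun B : ℕ => (1 / (B : ℝ)) * ∑ i ∈ Finset.Icc 1 B, queueDep Q₀ a d i)
      atTop (nhds dbar) := by
  have hD0 : 0 ≤ D := le_trans (hd 0) (hdD 0)
  have h1 : ∀ᶠ (B : ℕ) in atTop, c / 2 < (1 / (B : ℝ)) * ∑ i ∈ Finset.Icc 1 B, (a i - d i) :=
    hnet.eventually (eventually_gt_nhds (by linarith))
  obtain ⟨N₁, hN₁⟩ := eventually_atTop.mp h1
  set N₀ : ℕ := max N₁ (max 1 (Nat.ceil (2 * D / c))) with hN₀def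
  have hQ : ∀ B, N₀ ≤ B → D ≤ queueLen Q₀ a d B := by
    intro B hB
    have hB1 : 1 ≤ B := le_trans (le_trans (le_max_left _ _) (le_max_right _ _)) hB
    have hBpos : (0 : ℝ) < (B : ℝ) := by exact_mod_cast hB1
    have hS : c / 2 < (1 / (B : ℝ)) * ∑ i ∈ Finset.Icc 1 B, (a i - d i) :=
      hN₁ B (le_trans (le_max_left _ _) hB)
    have hS' : (c / 2) * (B : ℝ) ≤ ∑ i ∈ Finset.Icc 1 B, (a i - d i) := by
      rw [one_div, inv_mul_eq_div] at hS
      exact le_of_lt ((lt_div_iff₀ hBpos).mp hS)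
    have hceil : (2 * D / c : ℝ) ≤ (B : ℝ) := by
      have h2 : Nat.ceil (2 * D / c) ≤ B :=
        le_trans (le_trans (le_max_right _ _) (le_max_right _ _)) hB
      exact le_trans (Nat.le_ceil _) (by exact_mod_cast h2)
    have hDB : D ≤ (c / 2) * (B : ℝ) := by
      have := mul_le_mul_of_nonneg_left hceil (by positivity : (0:ℝ) ≤ c / 2)
      calc D = (c / 2) * (2 * D / c) := by field_simp
        _ ≤ (c / 2) * (B : ℝ) := this
    have := queueLen_ge Q₀ a d B
    linarith
  have hdep : ∀ i, N₀ + 1 ≤ i → queueDep Q₀ a d i = d i := by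
    intro i hi
    have : N₀ ≤ i - 1 := by omega
    exact min_eq_right (le_trans (hdD i) (hQ _ this))
  set K : ℝ := ∑ i ∈ Finset.Icc 1 N₀, (queueDep Q₀ a d i - d i) with hK
  have hsum : ∀ B, N₀ ≤ B →
      ∑ i ∈ Finset.Icc 1 B, (queueDep Q₀ a d i - d i) = K := by
    intro B hB
    rw [hK]
    refine (Finset.sum_subset (Finset.Icc_subset_Icc_right hB) ?_).symm
    intro i hiB hiN
    simp only [Finset.mem_Icc] at hiB hiN
    have : N₀ + 1 ≤ i := by omega
    rw [hdep i this]; ring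
  have hzero : Tendsto (fun B : ℕ => (1 / (B : ℝ)) * K) atTop (nhds 0) := by
    simpa using tendsto_one_div_atTop_nhds_zero_nat.mul_const K
  have hmain : Tendsto (fun B : ℕ =>
      (1 / (B : ℝ)) * ∑ i ∈ Finset.Icc 1 B, d i + (1 / (B : ℝ)) * K)
      atTop (nhds (dbar + 0)) := hdavg.add hzero
  rw [add_zero] at hmain
  refine hmain.congr' ?_
  filter_upwards [eventually_ge_atTop N₀] with B hB
  have h2 := hsum B hB
  rw [Finset.sum_sub_distrib] at h2
  rw [← h2]
  ring
end

section
/- Let Q₀ ≥ 0 and let a, d : {1,2,...} → ℝ be nonnegative sequences with a bounded (there is A with a[i] ≤ A for all i), queue lengths Q[0] = Q₀, Q[b] = max{Q[b−1] − d[b], 0} + a[b], and departures b[i] = min{Q[i−1], d[i]}. If (1/B) Σ_{i=1}^{B} (a[i] − d[i]) → c for some c < 0 (average demand strictly exceeds average arrivals) and (1/B) Σ_{i=1}^{B} a[i] → ā, then the average departure rate converges to the average arrival rate: (1/B) Σ_{i=1}^{B} b[i] → ā as B → ∞. -/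
open Finset Filter

/-- If the arrivals are bounded, the average net input tends to `c < 0`
(underloaded queue) and the average arrival rate tends to `ā`, then the
average departure rate tends to `ā`. -/
theorem queue_departure_rate_underloaded
    (Q₀ : ℝ) (hQ₀ : 0 ≤ Q₀) (a d : ℕ → ℝ)
    (ha : ∀ i, 0 ≤ a i) (hd : ∀ i, 0 ≤ d i)
    (A : ℝ) (haA : ∀ i, a i ≤ A)
    (c : ℝ) (hc : c < 0)
    (hnet : Tendsto (fun B : ℕ => (1 / (B : ℝ)) * ∑ i ∈ Finset.Icc 1 B, (a i - d i))
      atTop (nhds c))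
    (abar : ℝ)
    (haavg : Tendsto (fun B : ℕ => (1 / (B : ℝ)) * ∑ i ∈ Finset.Icc 1 B, a i)
      atTop (nhds abar)) :
    Tendsto (fun B : ℕ => (1 / (B : ℝ)) * ∑ i ∈ Finset.Icc 1 B, queueDep Q₀ a d i)
      atTop (nhds abar) := by
  have hA : 0 ≤ A := (ha 0).trans (haA 0)
  set Q := queueLen Q₀ a d with hQdef
  have hsucc : ∀ n, Q (n+1) = max (Q n - d (n+1)) 0 + a (n+1) := fun n => rfl
  have hQnn : ∀ b, 0 ≤ Q b := by
    intro b
    induction b with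
    | zero => simpa [hQdef, queueLen] using hQ₀
    | succ n ih =>
      rw [hsucc]
      exact add_nonneg (le_max_right _ _) (ha _)
  set S : ℕ → ℝ := fun n => ∑ i ∈ Finset.Icc 1 n, (a i - d i) with hSdef
  have hdep : ∀ n, queueDep Q₀ a d (n+1) = min (Q n) (d (n+1)) := by
    intro n; simp [queueDep, hQdef]
  have hsum : ∀ B, ∑ i ∈ Finset.Icc 1 B, queueDep Q₀ a d i
      = Q₀ + (∑ i ∈ Finset.Icc 1 B, a i) - Q B := by
    intro B
    induction B with
    | zero => simp [hQdef, queueLen]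
    | succ n ih =>
      rw [Finset.sum_Icc_succ_top (by omega), Finset.sum_Icc_succ_top (by omega), ih,
        hdep, hsucc]
      rcases le_total (Q n) (d (n+1)) with h | h
      · rw [min_eq_left h, max_eq_right (by linarith)]; ring
      · rw [min_eq_right h, max_eq_left (by linarith)]; ring
  have hbound : ∀ B, Q B ≤ Q₀ + S B ∨ ∃ k, 1 ≤ k ∧ k ≤ B ∧ Q B ≤ A + (S B - S k) := by
    intro B
    induction B with
    | zero => left; simp [hQdef, queueLen, hSdef]
    | succ n ih =>
      have hS : S (n+1) = S n + (a (n+1) - d (n+1)) :=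
        Finset.sum_Icc_succ_top (by omega) _
      rcases le_total (Q n - d (n+1)) 0 with h | h
      · right
        refine ⟨n+1, by omega, le_rfl, ?_⟩
        rw [hsucc, max_eq_right h]
        have := haA (n+1)
        simp only [zero_add]
        linarith
      · have hq : Q (n+1) = Q n + (a (n+1) - d (n+1)) := by
          rw [hsucc, max_eq_left h]; ring
        rcases ih with h1 | ⟨k, hk1, hk2, hk3⟩
        · left; rw [hq, hS]; linarith
        · right; exact ⟨k, hk1, by omega, by rw [hq, hS]; linarith⟩
  have hnet' : Tendsto (fun B : ℕ => S B / B) atTop (nhds c) :=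
    hnet.congr (fun B => by rw [one_div, inv_mul_eq_div])
  have hQtend : Tendsto (fun B : ℕ => Q B / B) atTop (nhds 0) := by
    rw [Metric.tendsto_atTop]
    intro ε hε
    have hε3 : 0 < ε/3 := by linarith
    obtain ⟨N₁, hN₁⟩ := (Metric.tendsto_atTop.mp hnet') (ε/3) hε3
    set M : ℝ := ∑ k ∈ Finset.Icc 1 N₁, |S k| with hM
    have hMnn : 0 ≤ M := Finset.sum_nonneg fun _ _ => abs_nonneg _
    have hMk : ∀ k, 1 ≤ k → k ≤ N₁ → -M ≤ S k := by
      intro k h1 h2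
      have h3 : |S k| ≤ M := Finset.single_le_sum (f := fun k => |S k|)
        (fun _ _ => abs_nonneg _) (Finset.mem_Icc.mpr ⟨h1, h2⟩)
      linarith [neg_abs_le (S k)]
    obtain ⟨N₂, hN₂⟩ := exists_nat_ge ((Q₀ + A + M)/(ε/3) + N₁ + 1)
    refine ⟨N₂, fun B hB => ?_⟩
    have hBR : ((Q₀ + A + M)/(ε/3) + N₁ + 1 : ℝ) ≤ B :=
      hN₂.trans (by exact_mod_cast hB)
    have hdivnn : (0:ℝ) ≤ (Q₀ + A + M)/(ε/3) := div_nonneg (by linarith) hε3.le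
    have hBN₁ : N₁ ≤ B := by
      have : (N₁ : ℝ) ≤ B := by linarith
      exact_mod_cast this
    have hBpos : (0:ℝ) < B := by
      have := Nat.cast_nonneg (α := ℝ) N₁
      linarith
    have hcB : Q₀ + A + M < ε/3 * B := by
      have h1 : (Q₀ + A + M)/(ε/3) < B := by
        have := Nat.cast_nonneg (α := ℝ) N₁
        linarith
      calc Q₀ + A + M = (Q₀ + A + M)/(ε/3) * (ε/3) := by field_simp
      _ < B * (ε/3) := mul_lt_mul_of_pos_right h1 hε3
      _ = ε/3 * B := mul_comm _ _
    have hSB := hN₁ B hBN₁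
    rw [Real.dist_eq] at hSB
    have hSBub : S B < (c + ε/3) * B := by
      have h2 := (abs_lt.mp hSB).2
      calc S B = (S B / B) * B := by field_simp
      _ < (c + ε/3) * B := mul_lt_mul_of_pos_right (by linarith) hBpos
    have hcBneg : c * B < 0 := mul_neg_of_neg_of_pos hc hBpos
    rw [Real.dist_eq, sub_zero, abs_of_nonneg (div_nonneg (hQnn B) hBpos.le),
      div_lt_iff₀ hBpos]
    rcases hbound B with h | ⟨k, hk1, hk2, hk3⟩
    · nlinarith
    · have hkB : (k:ℝ) ≤ B := by exact_mod_cast hk2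
      rcases le_or_gt N₁ k with hkN | hkN
      · have hSk := hN₁ k hkN
        rw [Real.dist_eq] at hSk
        have hkpos : (0:ℝ) < k := by exact_mod_cast hk1
        have hSklb : (c - ε/3) * k < S k := by
          have h2 := (abs_lt.mp hSk).1
          calc (c - ε/3) * k < (S k / k) * k := mul_lt_mul_of_pos_right (by linarith) hkpos
          _ = S k := by field_simp
        have hmono : (ε/3 - c) * k ≤ (ε/3 - c) * B :=
          mul_le_mul_of_nonneg_left hkB (by linarith)
        nlinarith
      · have hSk := hMk k hk1 (by omega)
        nlinarith
  have hconst : Tendsto (fun B : ℕ => Q₀ / B) atTop (nhds 0) :=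
    tendsto_const_div_atTop_nhds_zero_nat Q₀
  have hfinal := (hconst.add haavg).sub hQtend
  rw [zero_add, sub_zero] at hfinal
  refine hfinal.congr (fun B => ?_)
  rw [hsum B]
  ring
end

section
/- Let n ≥ 1, let γ₁, ..., γ_n be strictly positive reals (the channel gains), and let P > 0 (the power budget). Then (i) there exists a unique μ > 0 (the water level) such that Σ_{j=1}^{n} max{μ − 1/γ_j, 0} = P; and (ii) the water-filling allocation p*_j = max{μ − 1/γ_j, 0} is optimal: for every p ∈ ℝⁿ with p_j ≥ 0 for all j and Σ_{j=1}^{n} p_j ≤ P, one has Σ_{j=1}^{n} log(1 + γ_j p_j) ≤ Σ_{j=1}^{n} log(1 + γ_j p*_j). -/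
open Finset

private lemma log_sub_log_le (x y : ℝ) (hx : 0 < x) (hy : 0 < y) :
    Real.log x - Real.log y ≤ (x - y) / y := by
  have h := Real.log_le_sub_one_of_pos (show 0 < x / y from div_pos hx hy)
  rw [Real.log_div hx.ne' hy.ne'] at h
  have : x / y - 1 = (x - y) / y := by field_simp
  linarith [this ▸ h]

/-- Water-filling: for gains `γ_j > 0` and power budget `P > 0`, there is a
unique water level `μ > 0` with `Σ_j max{μ - 1/γ_j, 0} = P`, and the resulting
allocation `p*_j = max{μ - 1/γ_j, 0}` maximizes `Σ_j log(1 + γ_j p_j)` over all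
nonnegative allocations with `Σ_j p_j ≤ P`. -/
theorem waterfilling_optimal
    (n : ℕ) (hn : 1 ≤ n) (γ : Fin n → ℝ) (hγ : ∀ j, 0 < γ j)
    (P : ℝ) (hP : 0 < P) :
    (∃! w : ℝ, 0 < w ∧ ∑ j, max (w - 1 / γ j) 0 = P) ∧
    (∀ w : ℝ, 0 < w → (∑ j, max (w - 1 / γ j) 0 = P) →
      ∀ p : Fin n → ℝ, (∀ j, 0 ≤ p j) → (∑ j, p j ≤ P) →
        ∑ j, Real.log (1 + γ j * p j)
          ≤ ∑ j, Real.log (1 + γ j * max (w - 1 / γ j) 0)) := by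
  have hne : (Finset.univ : Finset (Fin n)).Nonempty := ⟨⟨0, hn⟩, mem_univ _⟩
  have hinvpos : ∀ j, 0 < 1 / γ j := fun j => one_div_pos.mpr (hγ j)
  -- strict monotonicity where positive
  have hstrict : ∀ a b : ℝ, a < b → (∑ j, max (a - 1 / γ j) 0) = P →
      (∑ j, max (a - 1 / γ j) 0) < ∑ j, max (b - 1 / γ j) 0 := by
    intro a b hab hfa
    have hex : ∃ j ∈ (Finset.univ : Finset (Fin n)), 0 < max (a - 1 / γ j) 0 := by
      by_contra h
      push_neg at h
      have : (∑ j, max (a - 1 / γ j) 0) = 0 := by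
        apply Finset.sum_eq_zero
        intro j hj
        exact le_antisymm (h j hj) (le_max_right _ _)
      linarith
    obtain ⟨j, hjmem, hj⟩ := hex
    apply Finset.sum_lt_sum
    · intro i _
      exact max_le_max (by linarith) le_rfl
    · refine ⟨j, hjmem, ?_⟩
      have h1 : 0 < a - 1 / γ j := by
        by_contra h
        push_neg at h
        rw [max_eq_right h] at hj
        exact lt_irrefl _ hj
      rw [max_eq_left h1.le, max_eq_left (by linarith)]
      linarith
  constructor
  · -- existence and uniqueness
    have hcont : Continuous (fun w : ℝ => ∑ j, max (w - 1 / γ j) 0) := by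
      apply continuous_finset_sum
      intro j _
      exact (continuous_id.sub continuous_const).max continuous_const
    set M := Finset.univ.sup' hne (fun j => 1 / γ j) with hM
    have hMle : ∀ j, 1 / γ j ≤ M := fun j => Finset.le_sup' (fun i => 1 / γ i) (mem_univ j)
    have hMpos : 0 < M := lt_of_lt_of_le (hinvpos ⟨0, hn⟩) (hMle _)
    have hb : P ≤ ∑ j, max (P + M - 1 / γ j) 0 := by
      calc P = ∑ _j : Fin n, P / n := by
              rw [Finset.sum_const, card_univ, Fintype.card_fin, nsmul_eq_mul]
              field_simp
        _ ≤ ∑ j, max (P + M - 1 / γ j) 0 := by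
              apply Finset.sum_le_sum
              intro j _
              have h1 : P / n ≤ P := by
                rw [div_le_iff₀ (by exact_mod_cast Nat.pos_of_ne_zero (by omega))]
                nlinarith [show (1:ℝ) ≤ n from by exact_mod_cast hn]
              have : P ≤ P + M - 1 / γ j := by have := hMle j; linarith
              exact le_trans h1 (le_trans this (le_max_left _ _))
    have h0 : (∑ j, max ((0:ℝ) - 1 / γ j) 0) = 0 := by
      apply Finset.sum_eq_zero
      intro j _
      exact max_eq_right (by linarith [hinvpos j])
    have hmem : P ∈ Set.Icc (∑ j, max ((0:ℝ) - 1 / γ j) 0)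
        (∑ j, max (P + M - 1 / γ j) 0) := ⟨by rw [h0]; exact hP.le, hb⟩
    obtain ⟨w, hwmem, hw0⟩ := intermediate_value_Icc (by positivity) hcont.continuousOn hmem
    have hw : (∑ j, max (w - 1 / γ j) 0) = P := hw0
    have hwpos : 0 < w := by
      by_contra h
      push_neg at h
      have : (∑ j, max (w - 1 / γ j) 0) = 0 := by
        apply Finset.sum_eq_zero
        intro j _
        exact max_eq_right (by linarith [hinvpos j])
      rw [hw] at this
      linarith
    refine ⟨w, ⟨hwpos, hw⟩, ?_⟩
    rintro v ⟨hvpos, hv⟩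
    rcases lt_trichotomy v w with h | h | h
    · have := hstrict v w h hv
      rw [hv, hw] at this
      exact absurd this (lt_irrefl P)
    · exact h
    · have := hstrict w v h hw
      rw [hv, hw] at this
      exact absurd this (lt_irrefl P)
  · -- optimality
    intro w hw hsum p hp hpsum
    have key : ∀ j, Real.log (1 + γ j * p j) - Real.log (1 + γ j * max (w - 1 / γ j) 0)
        ≤ (p j - max (w - 1 / γ j) 0) / w := by
      intro j
      set q := max (w - 1 / γ j) 0 with hq
      have hqnn : 0 ≤ q := le_max_right _ _
      have hx : 0 < 1 + γ j * p j := by nlinarith [hγ j, hp j]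
      have hy : 0 < 1 + γ j * q := by nlinarith [hγ j]
      have hlog := log_sub_log_le _ _ hx hy
      have hrhs : (1 + γ j * p j - (1 + γ j * q)) / (1 + γ j * q)
          ≤ (p j - q) / w := by
        rcases le_or_gt (w - 1 / γ j) 0 with h | h
        · have hq0 : q = 0 := max_eq_right h
          have h2 : w ≤ 1 / γ j := by linarith
          have hγw : γ j * w ≤ 1 := by
            calc γ j * w ≤ γ j * (1 / γ j) :=
                  mul_le_mul_of_nonneg_left h2 (hγ j).le
              _ = 1 := mul_one_div_cancel (hγ j).ne'
          rw [hq0]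
          have heq : (1 + γ j * p j - (1 + γ j * 0)) / (1 + γ j * 0) = γ j * p j := by
            norm_num
          rw [heq, le_div_iff₀ hw]
          nlinarith [hp j]
        · have hq1 : q = w - 1 / γ j := max_eq_left h.le
          have hgy : 1 + γ j * q = γ j * w := by
            rw [hq1, mul_sub, mul_one_div_cancel (hγ j).ne']
            ring
          rw [hgy, div_le_div_iff₀ (mul_pos (hγ j) hw) hw, hq1]
          have hinv : γ j * (1 / γ j) = 1 := mul_one_div_cancel (hγ j).ne'
          nlinarith [hinv]
      linarith
    have hsum2 : ∑ j, (Real.log (1 + γ j * p j) - Real.log (1 + γ j * max (w - 1 / γ j) 0))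
        ≤ ∑ j, (p j - max (w - 1 / γ j) 0) / w :=
      Finset.sum_le_sum fun j _ => key j
    rw [Finset.sum_sub_distrib] at hsum2
    have : ∑ j, (p j - max (w - 1 / γ j) 0) / w = ((∑ j, p j) - P) / w := by
      rw [← Finset.sum_div, Finset.sum_sub_distrib, hsum]
    rw [this] at hsum2
    have hle : ((∑ j, p j) - P) / w ≤ 0 :=
      div_nonpos_of_nonpos_of_nonneg (by linarith) hw.le
    linarith
end
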